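/- Suppose each good replica of shard S sends at most one prepare message for round ρ of view v, and suppose for i ∈ {1,2} there exist prepare certificates P_i, each a set of prepare messages for value M_i signed by nf(S) distinct replicas of S. If nf(S) > 2f(S) then M_1 = M_2. -/
import Mathlib


/-- Non-divergence: if good replicas send at most one prepare message per round,
and two prepare certificates (each with `nf` distinct signers) exist for values
`M₁` and `M₂`, then `M₁ = M₂` whenever `nf > 2f`. -/
theorem non_divergence {α V : Type*} [DecidableEq α]
    (S F : Finset α) (hF : F ⊆ S)
    (nf f : ℕ) (hnf : nf = (S \ F).card) (hf : f = F.card)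
    (hmaj : nf > 2 * f)
    (sent : α → V → Prop)
    (hgood_once : ∀ r ∈ S \ F, ∀ m₁ m₂ : V, sent r m₁ → sent r m₂ → m₁ = m₂)
    (M₁ M₂ : V) (Q₁ Q₂ : Finset α)
    (hQ₁ : Q₁ ⊆ S) (hQ₂ : Q₂ ⊆ S)
    (hQ₁card : Q₁.card = nf) (hQ₂card : Q₂.card = nf)
    (hQ₁sent : ∀ r ∈ Q₁, sent r M₁) (hQ₂sent : ∀ r ∈ Q₂, sent r M₂) :
    M₁ = M₂ := by
  have hS : (S \ F).card + F.card = S.card := Finset.card_sdiff_add_card_eq_card hF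
  have hunion : (Q₁ ∪ Q₂).card ≤ S.card :=
    Finset.card_le_card (Finset.union_subset hQ₁ hQ₂)
  have hincl : (Q₁ ∩ Q₂).card + (Q₁ ∪ Q₂).card = Q₁.card + Q₂.card :=
    Finset.card_inter_add_card_union Q₁ Q₂
  have hinter : (Q₁ ∩ Q₂).card > f := by omega
  have hex : ((Q₁ ∩ Q₂) \ F).Nonempty := by
    rw [← Finset.card_pos]
    have := Finset.le_card_sdiff F (Q₁ ∩ Q₂)
    omega
  obtain ⟨r, hr⟩ := hex
  rw [Finset.mem_sdiff, Finset.mem_inter] at hr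
  exact hgood_once r (Finset.mem_sdiff.mpr ⟨hQ₁ hr.1.1, hr.2⟩) M₁ M₂
    (hQ₁sent r hr.1.1) (hQ₂sent r hr.1.2)
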